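/- Let n ≥ 1 and let k = (k_1, …, k_n) be a regular tuple of integers. There exists J ∈ GSO_{2n}(ℂ) satisfying J D_k(w) J^{−1} = D_k(w)^{−1} for every w ∈ ℂ× and J² = 1 if and only if n is even; moreover every such J has multiplier ν(J) = 1. -/

import Mathlib

/-! Conjugating `D_k(2)` to its inverse forces `J a b * 2 ^ weight b = 2 ^ (-weight a) * J a b`.
For regular `k` the weights `±k_i` are pairwise distinct, so the only surviving entries pair
`k_i` with `-k_i`, i.e. `J = Q · diag c`. Then `J² = 1` reads `c (swap a) * c a = 1`, which gives
`Jᵀ Q J = Q`, hence `ν = 1`, and `det J = det Q = (-1)^n`. Since `det J = ν^n = 1`, `n` is even;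
conversely, for even `n` the matrix `Q` itself is such an involution. -/

open Matrix

noncomputable section

/-- 2n×2n matrices, indexed by `Fin n ⊕ Fin n`. -/
abbrev Mat (n : ℕ) (k : Type*) := Matrix (Fin n ⊕ Fin n) (Fin n ⊕ Fin n) k

/-- The standard split symmetric form matrix `Q_{2n} = [[0, 1], [1, 0]]`. -/
def Qmat (n : ℕ) : Mat n ℂ := fromBlocks 0 1 1 0

/-- `A ∈ GO_{2n}(ℂ)` with multiplier `ν`. -/
def inGO (n : ℕ) (A : Mat n ℂ) (ν : ℂ) : Prop :=
  IsUnit A.det ∧ ν ≠ 0 ∧ Aᵀ * Qmat n * A = ν • Qmat n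

/-- `A ∈ GSO_{2n}(ℂ)` with multiplier `ν`: in `GO_{2n}` and `det A = ν ^ n`. -/
def inGSO (n : ℕ) (A : Mat n ℂ) (ν : ℂ) : Prop :=
  inGO n A ν ∧ A.det = ν ^ n

/-- `D_k(w) = diag(w^{k_1}, …, w^{k_n}, w^{-k_1}, …, w^{-k_n})`. -/
def Dk {n : ℕ} (kk : Fin n → ℤ) (w : ℂ) : Mat n ℂ :=
  Matrix.diagonal (Sum.elim (fun i => w ^ kk i) (fun i => w ^ (-kk i)))

/-- A tuple `(k_1, …, k_n)` of integers is regular if each `k_i` is nonzero and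
`k_i ≠ ±k_j` for all `i ≠ j`. -/
def Regular {n : ℕ} (kk : Fin n → ℤ) : Prop :=
  (∀ i, kk i ≠ 0) ∧ ∀ i j, i ≠ j → kk i ≠ kk j ∧ kk i ≠ -kk j

lemma Matrix.apply_eq_zero_of_mul_diagonal_eq_diagonal_mul {m l R : Type*} [Fintype m] [Fintype l]
    [DecidableEq m] [DecidableEq l] [CommRing R] [NoZeroDivisors R] {J : Matrix m l R}
    {d : l → R} {d' : m → R} (h : J * diagonal d = diagonal d' * J) {a : m} {b : l}
    (hab : d b ≠ d' a) : J a b = 0 := by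
  have hab' := congr_fun₂ h a b
  rw [mul_diagonal, diagonal_mul] at hab'
  have : J a b * (d b - d' a) = 0 := by rw [mul_sub, hab', mul_comm, sub_self]
  exact (mul_eq_zero.mp this).resolve_right (sub_ne_zero.mpr hab)

lemma Complex.two_zpow_injective : Function.Injective fun m : ℤ => (2 : ℂ) ^ m := by
  intro m m' h
  refine zpow_right_injective₀ (a := (2 : ℝ)) (by norm_num) (by norm_num) ?_
  simp only at h ⊢
  rw [← Complex.ofReal_inj]
  push_cast
  exact h

lemma Qmat_apply (n : ℕ) (a b : Fin n ⊕ Fin n) : Qmat n a b = if b = a.swap then 1 else 0 := by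
  rcases a with i | i <;> rcases b with j | j <;> simp [Qmat, one_apply, eq_comm]

lemma Qmat_transpose (n : ℕ) : (Qmat n)ᵀ = Qmat n := by
  simp [Qmat, fromBlocks_transpose]

lemma Qmat_mul_self (n : ℕ) : Qmat n * Qmat n = 1 := by
  simp [Qmat, fromBlocks_multiply, ← fromBlocks_one]

lemma inv_Qmat (n : ℕ) : (Qmat n)⁻¹ = Qmat n :=
  inv_eq_right_inv (Qmat_mul_self n)

lemma det_Qmat (n : ℕ) : (Qmat n).det = (-1) ^ n := by
  have hL : (fromBlocks 1 0 1 1 : Mat n ℂ).det = 1 := by simp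
  calc (Qmat n).det = (Qmat n * fromBlocks 1 0 1 1).det := by rw [det_mul, hL, mul_one]
    _ = (fromBlocks 1 1 1 0 : Mat n ℂ).det := by simp [Qmat, fromBlocks_multiply]
    _ = (-1) ^ n := by simp [det_fromBlocks_one₁₁, det_neg]

lemma Qmat_mul_diagonal_mul_Qmat (n : ℕ) (d : Fin n ⊕ Fin n → ℂ) :
    Qmat n * diagonal d * Qmat n = diagonal (d ∘ Sum.swap) := by
  obtain ⟨d₁, d₂, rfl⟩ : ∃ d₁ d₂, d = Sum.elim d₁ d₂ := ⟨_, _, (Sum.elim_comp_inl_inr d).symm⟩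
  rw [← fromBlocks_diagonal, Qmat, fromBlocks_multiply, fromBlocks_multiply]
  simp [fromBlocks_diagonal]

lemma Qmat_mul_diagonal_mul_self (n : ℕ) (c : Fin n ⊕ Fin n → ℂ) :
    Qmat n * diagonal c * (Qmat n * diagonal c) = diagonal fun a => c a.swap * c a := by
  rw [← mul_assoc, Qmat_mul_diagonal_mul_Qmat, diagonal_mul_diagonal, Function.comp_def]

lemma transpose_Qmat_mul_diagonal_mul_Qmat_mul (n : ℕ) (c : Fin n ⊕ Fin n → ℂ) :
    (Qmat n * diagonal c)ᵀ * Qmat n * (Qmat n * diagonal c) =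
      Qmat n * diagonal fun a => c a.swap * c a := by
  calc (Qmat n * diagonal c)ᵀ * Qmat n * (Qmat n * diagonal c)
      = diagonal c * (Qmat n * Qmat n) * Qmat n * diagonal c := by
        simp only [transpose_mul, diagonal_transpose, Qmat_transpose, Matrix.mul_assoc]
    _ = Qmat n * (Qmat n * diagonal c * (Qmat n * diagonal c)) := by
        simp only [Qmat_mul_self, Matrix.mul_one, ← Matrix.mul_assoc, Qmat_mul_self, Matrix.one_mul]
    _ = Qmat n * diagonal fun a => c a.swap * c a := by rw [Qmat_mul_diagonal_mul_self]

def weight {n : ℕ} (kk : Fin n → ℤ) : Fin n ⊕ Fin n → ℤ := Sum.elim kk (-kk)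

lemma Dk_eq_diagonal {n : ℕ} (kk : Fin n → ℤ) (w : ℂ) :
    Dk kk w = diagonal fun a => w ^ weight kk a := by
  rw [Dk]
  congr
  ext (i | i) <;> rfl

lemma weight_swap {n : ℕ} (kk : Fin n → ℤ) (a : Fin n ⊕ Fin n) :
    weight kk a.swap = -weight kk a := by
  cases a <;> simp [weight]

lemma Regular.weight_injective {n : ℕ} {kk : Fin n → ℤ} (hreg : Regular kk) :
    Function.Injective (weight kk) := by
  obtain ⟨hnz, hdist⟩ := hreg
  have heq (i j : Fin n) (h : kk i = kk j) : i = j := by_contra fun hij => (hdist i j hij).1 h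
  have hne (i j : Fin n) : kk i ≠ -kk j := by
    rcases eq_or_ne i j with rfl | hij
    · exact fun h => hnz i (by omega)
    · exact (hdist i j hij).2
  rintro (i | i) (j | j) h <;>
    simp only [weight, Sum.elim_inl, Sum.elim_inr, Pi.neg_apply, neg_inj] at h
  · exact congrArg _ (heq i j h)
  · exact (hne i j h).elim
  · exact (hne j i (by omega)).elim
  · exact congrArg _ (heq i j h)

lemma inv_Dk {n : ℕ} (kk : Fin n → ℤ) {w : ℂ} (hw : w ≠ 0) :
    (Dk kk w)⁻¹ = Qmat n * Dk kk w * Qmat n := by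
  rw [Dk_eq_diagonal, Qmat_mul_diagonal_mul_Qmat]
  refine inv_eq_right_inv ?_
  rw [diagonal_mul_diagonal, diagonal_eq_one]
  ext a
  simp only [Pi.one_apply, Function.comp_apply, weight_swap, _root_.zpow_neg]
  exact mul_inv_cancel₀ (zpow_ne_zero _ hw)

lemma eq_Qmat_mul_diagonal_of_conj_Dk {n : ℕ} {kk : Fin n → ℤ} (hreg : Regular kk)
    {J : Mat n ℂ} (hconj : J * Dk kk 2 * J⁻¹ = (Dk kk 2)⁻¹) (hsq : J * J = 1) :
    J = Qmat n * diagonal fun b => J b.swap b := by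
  have hcomm : J * Dk kk 2 = (Dk kk 2)⁻¹ * J := by
    rw [← hconj, inv_eq_right_inv hsq, Matrix.mul_assoc _ J, hsq, Matrix.mul_one]
  rw [inv_Dk kk two_ne_zero, Dk_eq_diagonal, Qmat_mul_diagonal_mul_Qmat] at hcomm
  ext a b
  rw [mul_diagonal, Qmat_apply]
  split_ifs with hb
  · rw [hb, Sum.swap_swap, one_mul]
  · rw [zero_mul]
    refine apply_eq_zero_of_mul_diagonal_eq_diagonal_mul hcomm fun h => hb ?_
    exact hreg.weight_injective (Complex.two_zpow_injective h)

lemma eq_one_of_inGO_Qmat_mul_diagonal {n : ℕ} (hn : 1 ≤ n) {c : Fin n ⊕ Fin n → ℂ}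
    (hc : (fun a => c a.swap * c a) = 1) {ν : ℂ} (hGO : inGO n (Qmat n * diagonal c) ν) :
    ν = 1 := by
  have h := hGO.2.2
  rw [transpose_Qmat_mul_diagonal_mul_Qmat_mul, hc, Pi.one_def, diagonal_one, Matrix.mul_one] at h
  simpa [Qmat, eq_comm] using congr_fun₂ h (Sum.inl ⟨0, hn⟩) (Sum.inr ⟨0, hn⟩)

lemma det_Qmat_mul_diagonal {n : ℕ} {c : Fin n ⊕ Fin n → ℂ}
    (hc : (fun a => c a.swap * c a) = 1) : (Qmat n * diagonal c).det = (-1) ^ n := by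
  rw [det_mul, det_Qmat, det_diagonal, Fintype.prod_sum_type, ← Finset.prod_mul_distrib,
    Finset.prod_eq_one fun i _ => by simpa using congr_fun hc (Sum.inr i), mul_one]

lemma Qmat_inGSO {n : ℕ} (hn : Even n) : inGSO n (Qmat n) 1 := by
  refine ⟨⟨?_, one_ne_zero, ?_⟩, ?_⟩
  · simp [det_Qmat, hn.neg_one_pow]
  · rw [Qmat_transpose, Qmat_mul_self, Matrix.one_mul, one_smul]
  · rw [det_Qmat, hn.neg_one_pow, one_pow]

/-- There exists `J ∈ GSO_{2n}(ℂ)` with `J D_k(w) J⁻¹ = D_k(w)⁻¹` for all `w ∈ ℂ×` and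
`J² = 1` iff `n` is even; moreover every such `J` has multiplier `1`. -/
theorem gso_involution (n : ℕ) (hn : 1 ≤ n) (kk : Fin n → ℤ) (hreg : Regular kk) :
    ((∃ (J : Mat n ℂ) (ν : ℂ), inGSO n J ν ∧
        (∀ w : ℂ, w ≠ 0 → J * Dk kk w * J⁻¹ = (Dk kk w)⁻¹) ∧ J * J = 1) ↔ Even n) ∧
    (∀ (J : Mat n ℂ) (ν : ℂ), inGSO n J ν →
        (∀ w : ℂ, w ≠ 0 → J * Dk kk w * J⁻¹ = (Dk kk w)⁻¹) → J * J = 1 → ν = 1) := by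
  have key (J : Mat n ℂ) (ν : ℂ) (hJ : inGSO n J ν)
      (hconj : ∀ w : ℂ, w ≠ 0 → J * Dk kk w * J⁻¹ = (Dk kk w)⁻¹) (hsq : J * J = 1) :
      ν = 1 ∧ J.det = (-1) ^ n := by
    obtain ⟨c, rfl⟩ : ∃ c, J = Qmat n * diagonal c :=
      ⟨_, eq_Qmat_mul_diagonal_of_conj_Dk hreg (hconj 2 two_ne_zero) hsq⟩
    rw [Qmat_mul_diagonal_mul_self, diagonal_eq_one] at hsq
    exact ⟨eq_one_of_inGO_Qmat_mul_diagonal hn hsq hJ.1, det_Qmat_mul_diagonal hsq⟩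
  refine ⟨⟨?_, fun heven => ⟨Qmat n, 1, Qmat_inGSO heven, ?_, Qmat_mul_self n⟩⟩,
    fun J ν hJ hconj hsq => (key J ν hJ hconj hsq).1⟩
  · rintro ⟨J, ν, hJ, hconj, hsq⟩
    obtain ⟨rfl, hdet⟩ := key J ν hJ hconj hsq
    rw [hJ.2, one_pow] at hdet
    exact (neg_one_pow_eq_one_iff_even (by norm_num)).mp hdet.symm
  · intro w hw
    rw [inv_Qmat, inv_Dk kk hw]
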